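/- Let q ≥ 2, m ≥ 1 be integers and for nonnegative integers t let Q(t) = ∏_{l=1}^{m}(1 - 1/q^{t·l}). Then ∑_{t=1}^{∞} (1 - Q(t)·(1 - 1/q^t)^{2m-2}) ≤ ∑_{t=1}^{∞} (1 - (1 - 1/q^t)^{3m-2}) = ∑_{k=1}^{3m-2} (-1)^{k-1} C(3m-2,k)/(q^k - 1). -/

import Mathlib

/-!
Writing `x = 1/q^t`, the inequality holds term by term because `Q(t) ≥ (1 - x)^m` and
`Q(t) ≤ 1`; the dominating series converges, so the smaller one does too. Expanding
`1 - (1 - x)^n` binomially turns the dominating series into a finite combination of the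
geometric series `∑_{t ≥ 1} q^{-kt} = 1/(q^k - 1)`.
-/

open Finset

lemma one_sub_one_sub_pow_eq_sum {R : Type*} [CommRing R] (y : R) (n : ℕ) :
    1 - (1 - y) ^ n = ∑ k ∈ Icc 1 n, (-1) ^ (k - 1) * (n.choose k : R) * y ^ k := by
  have hexpand : (1 - y) ^ n = ∑ k ∈ range (n + 1), (-y) ^ k * (n.choose k : R) := by
    rw [sub_eq_add_neg, add_comm, add_pow]
    simp
  rw [hexpand, sum_range_eq_add_Ico _ n.add_one_pos, Ico_add_one_right_eq_Icc]
  simp only [pow_zero, Nat.choose_zero_right, Nat.cast_one, mul_one, sub_add_eq_sub_sub,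
    sub_self, zero_sub, ← sum_neg_distrib]
  refine sum_congr rfl fun k hk => ?_
  obtain ⟨j, rfl⟩ : ∃ j, k = j + 1 := ⟨k - 1, by grind⟩
  rw [neg_pow, Nat.add_sub_cancel]
  ring

lemma hasSum_one_div_pow_succ {a : ℝ} (ha : 1 < a) :
    HasSum (fun t : ℕ => 1 / a ^ (t + 1)) (1 / (a - 1)) := by
  have ha0 : 0 < a := by linarith
  have hgeom := (hasSum_geometric_of_lt_one (by positivity : (0 : ℝ) ≤ 1 / a)
    ((div_lt_one ha0).mpr ha)).mul_left (1 / a)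
  have hvalue : 1 / a * (1 - 1 / a)⁻¹ = 1 / (a - 1) := by
    have : a - 1 ≠ 0 := by linarith
    field_simp
  rw [hvalue] at hgeom
  exact hgeom.congr_fun fun t => by rw [pow_succ', one_div_pow, one_div_mul_one_div]

lemma hasSum_one_sub_one_sub_one_div_pow {q : ℝ} (hq : 1 < q) (n : ℕ) :
    HasSum (fun t : ℕ => 1 - (1 - 1 / q ^ (t + 1)) ^ n)
      (∑ k ∈ Icc 1 n, (-1) ^ (k - 1) * (n.choose k : ℝ) / (q ^ k - 1)) := by
  simp_rw [one_sub_one_sub_pow_eq_sum]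
  refine hasSum_sum fun k hk => ?_
  have hqk : 1 < q ^ k := one_lt_pow₀ hq (by grind)
  have h := (hasSum_one_div_pow_succ hqk).mul_left ((-1) ^ (k - 1) * (n.choose k : ℝ))
  rw [mul_one_div] at h
  refine h.congr_fun fun t => ?_
  rw [one_div_pow, ← pow_mul, ← pow_mul, mul_comm (t + 1)]

lemma pow_one_sub_one_div_pow_le_prod {q : ℝ} (hq : 1 ≤ q) (t m : ℕ) :
    (1 - 1 / q ^ t) ^ m ≤ ∏ l ∈ Icc 1 m, (1 - 1 / q ^ (t * l)) := by
  have hqt : 1 ≤ q ^ t := one_le_pow₀ hq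
  calc (1 - 1 / q ^ t) ^ m = ∏ _l ∈ Icc 1 m, (1 - 1 / q ^ t) := by simp
    _ ≤ _ := by
      refine prod_le_prod (fun _ _ => sub_nonneg.mpr (div_le_one_of_le₀ hqt (by positivity)))
        fun l hl => ?_
      gcongr
      exact Nat.le_mul_of_pos_right t (mem_Icc.mp hl).1

lemma prod_one_sub_one_div_pow_le_one {q : ℝ} (hq : 1 ≤ q) (t m : ℕ) :
    ∏ l ∈ Icc 1 m, (1 - 1 / q ^ (t * l)) ≤ 1 :=
  prod_le_one (fun _ _ => sub_nonneg.mpr (div_le_one_of_le₀ (one_le_pow₀ hq) (by positivity)))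
    fun _ _ => sub_le_self _ (by positivity)

lemma one_sub_mul_pow_mem_Icc {y P : ℝ} {m k : ℕ} (hy0 : 0 ≤ y) (hy1 : y ≤ 1)
    (hyP : y ^ m ≤ P) (hP1 : P ≤ 1) :
    0 ≤ 1 - P * y ^ k ∧ 1 - P * y ^ k ≤ 1 - y ^ (m + k) := by
  have hyk : y ^ k ≤ 1 := pow_le_one₀ hy0 hy1
  constructor
  · nlinarith [pow_nonneg hy0 k]
  · rw [pow_add]
    nlinarith [pow_nonneg hy0 k]

/-- Let `q ≥ 2`, `m ≥ 1` be integers and `Q(t) = ∏_{l=1}^m (1 - 1/q^{t l})`. Then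
`∑_{t=1}^∞ (1 - Q(t)(1 - 1/q^t)^{2m-2}) ≤ ∑_{t=1}^∞ (1 - (1 - 1/q^t)^{3m-2})
 = ∑_{k=1}^{3m-2} (-1)^{k-1} C(3m-2,k)/(q^k - 1)`. -/
theorem stmt13 (q m : ℕ) (hq : 2 ≤ q) (hm : 1 ≤ m)
    (Q : ℕ → ℝ) (hQ : ∀ t, Q t = ∏ l ∈ Finset.Icc 1 m, (1 - 1 / (q : ℝ) ^ (t * l))) :
    (∑' t : ℕ, (1 - Q (t + 1) * (1 - 1 / (q : ℝ) ^ (t + 1)) ^ (2 * m - 2))) ≤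
        (∑' t : ℕ, (1 - (1 - 1 / (q : ℝ) ^ (t + 1)) ^ (3 * m - 2))) ∧
      (∑' t : ℕ, (1 - (1 - 1 / (q : ℝ) ^ (t + 1)) ^ (3 * m - 2))) =
        ∑ k ∈ Finset.Icc 1 (3 * m - 2),
          (-1 : ℝ) ^ (k - 1) * ((3 * m - 2).choose k : ℝ) / ((q : ℝ) ^ k - 1) := by
  have hq1 : (1 : ℝ) < q := by exact_mod_cast hq
  have hsum := hasSum_one_sub_one_sub_one_div_pow hq1 (3 * m - 2)
  have hterm : ∀ t : ℕ, 0 ≤ 1 - Q (t + 1) * (1 - 1 / (q : ℝ) ^ (t + 1)) ^ (2 * m - 2) ∧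
      1 - Q (t + 1) * (1 - 1 / (q : ℝ) ^ (t + 1)) ^ (2 * m - 2) ≤
        1 - (1 - 1 / (q : ℝ) ^ (t + 1)) ^ (3 * m - 2) := by
    intro t
    have hx1 : 1 / (q : ℝ) ^ (t + 1) ≤ 1 := div_le_one_of_le₀ (one_le_pow₀ hq1.le) (by positivity)
    rw [show 3 * m - 2 = m + (2 * m - 2) by omega, hQ]
    exact one_sub_mul_pow_mem_Icc (sub_nonneg.mpr hx1) (sub_le_self _ (by positivity))
      (pow_one_sub_one_div_pow_le_prod hq1.le _ _) (prod_one_sub_one_div_pow_le_one hq1.le _ _)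
  refine ⟨?_, hsum.tsum_eq⟩
  exact (hsum.summable.of_nonneg_of_le (fun t => (hterm t).1) fun t => (hterm t).2).tsum_le_tsum
    (fun t => (hterm t).2) hsum.summable
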